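/- arXiv:1605.01298 — 10 statements merged into one kernel-verified Lean document; each statement's English description precedes it below -/
import Mathlib

section
/- Let R be a domain with more elements than units (as cardinals, #R > #R^×). Then for every nonzero x ∈ R there exists y ∈ R such that yx + 1 is not a unit. -/
universe u

open Cardinal Function

theorem Cardinal.mk_le_mk_units_of_injective {α M : Type u} [Monoid M] {f : α → M}
    (hf : Injective f) (hunit : ∀ a, IsUnit (f a)) : #α ≤ #Mˣ :=
  mk_le_of_injective (f := fun a => (hunit a).unit) fun _ _ h => hf <| by
    simpa using congr_arg Units.val h

theorem stmt_0 (R : Type*) [CommRing R] [IsDomain R]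
    (h : Cardinal.mk Rˣ < Cardinal.mk R) :
    ∀ x : R, x ≠ 0 → ∃ y : R, ¬ IsUnit (y * x + 1) := by
  intro x hx
  by_contra! hunit
  have hinj : Injective fun y : R => y * x + 1 :=
    (add_left_injective 1).comp (mul_left_injective₀ hx)
  exact h.not_ge (mk_le_mk_units_of_injective hinj hunit)
end

section
/- Let R be a domain, not a field, satisfying Condition (E). Then there is an infinite sequence (a_n) of nonunits of R that are pairwise comaximal: (a_i) + (a_j) = R for all i ≠ j. -/
/-!
Start from a nonzero nonunit `p₀` (one exists since `R` is not a field) and repeatedly pick, by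
Condition (E), a nonunit `aₙ = yₙ pₙ + 1`, then set `pₙ₊₁ = pₙ aₙ`. Each `aₙ` is `≡ 1 mod pₙ`, hence
coprime to `pₙ`, which is divisible by all earlier `aᵢ`.
-/

open Function

theorem exists_pairwise_isCoprime_of_forall_exists {R : Type*} [CommSemiring R] (P : R → Prop)
    {p₀ : R} (hp₀ : P p₀) (hstep : ∀ p, P p → ∃ q, P q ∧ P (p * q) ∧ IsCoprime p q) :
    ∃ a : ℕ → R, (∀ n, P (a n)) ∧ Pairwise (IsCoprime on a) := by
  choose next hnext using fun p : {p // P p} => hstep p p.2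
  let prods : ℕ → {p // P p} := fun n => (fun p => ⟨p * next p, (hnext p).2.1⟩)^[n] ⟨p₀, hp₀⟩
  have prods_succ (n : ℕ) : (prods (n + 1) : R) = prods n * next (prods n) :=
    congrArg Subtype.val (iterate_succ_apply' _ n _)
  have dvd_prods {i n : ℕ} (hin : i < n) : next (prods i) ∣ prods n := by
    induction n, hin using Nat.le_induction with
    | base => exact prods_succ i ▸ dvd_mul_left _ _
    | succ n _ ih => exact prods_succ n ▸ dvd_mul_of_dvd_left ih _
  refine ⟨fun n => next (prods n), fun n => (hnext _).1, (Std.Symm.pairwise_on _).2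
    fun i n hin => (hnext (prods n)).2.2.of_isCoprime_of_dvd_left (dvd_prods hin)⟩

theorem exists_nonunit_isCoprime_of_not_isUnit_mul_add_one {R : Type*} [CommRing R]
    [NoZeroDivisors R] {p y : R} (hp₀ : p ≠ 0) (hp : ¬IsUnit p) (hy : ¬IsUnit (y * p + 1)) :
    ∃ q, (q ≠ 0 ∧ ¬IsUnit q) ∧ (p * q ≠ 0 ∧ ¬IsUnit (p * q)) ∧ IsCoprime p q := by
  have hcop : IsCoprime p (y * p + 1) := ⟨-y, 1, by ring⟩
  have hq₀ : y * p + 1 ≠ 0 := fun h => hp (isCoprime_zero_right.1 (h ▸ hcop))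
  exact ⟨y * p + 1, ⟨hq₀, hy⟩, ⟨mul_ne_zero hp₀ hq₀, fun h => hp (isUnit_of_mul_isUnit_left h)⟩,
    hcop⟩

theorem stmt_1 (R : Type*) [CommRing R] [IsDomain R] (hnf : ¬ IsField R)
    (hE : ∀ x : R, x ≠ 0 → ∃ y : R, ¬ IsUnit (y * x + 1)) :
    ∃ a : ℕ → R, (∀ n, ¬ IsUnit (a n)) ∧
      (∀ m n, m ≠ n → Ideal.span {a m} ⊔ Ideal.span {a n} = ⊤) := by
  obtain ⟨p₀, hp₀, hp₀u⟩ := Ring.exists_not_isUnit_of_not_isField hnf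
  obtain ⟨a, ha, hcop⟩ := exists_pairwise_isCoprime_of_forall_exists
    (fun p : R => p ≠ 0 ∧ ¬IsUnit p) ⟨hp₀, hp₀u⟩ fun p ⟨hp, hpu⟩ =>
      let ⟨_, hy⟩ := hE p hp
      exists_nonunit_isCoprime_of_not_isUnit_mul_add_one hp hpu hy
  refine ⟨a, fun n => (ha n).2, fun m n hmn => ?_⟩
  rw [← Ideal.isCoprime_iff_sup_eq, Ideal.isCoprime_span_singleton_iff]
  exact hcop hmn
end

section
/- Let R be a Furstenberg domain, not a field, satisfying Condition (E). Then R admits an infinite sequence (f_n) of pairwise comaximal irreducible elements; in particular the principal ideals (f_n) are pairwise distinct, so R has infinitely many atoms. -/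
/-!
Condition (E) turns a nonzero nonunit `x` into a nonunit `y * x + 1`, and an irreducible factor `g`
of it is coprime to `x`. Starting from any nonzero nonunit `p₀`, set `pₙ₊₁ = pₙ * gₙ` with `gₙ`
irreducible and coprime to `pₙ`: every earlier `gₘ` divides `pₙ`, so `gₙ` is coprime to all of them.
-/

open Function

theorem exists_irreducible_isCoprime_of_furstenberg {R : Type*} [CommRing R]
    (hF : ∀ x : R, x ≠ 0 → ¬IsUnit x → ∃ f : R, Irreducible f ∧ f ∣ x)
    (hE : ∀ x : R, x ≠ 0 → ∃ y : R, ¬IsUnit (y * x + 1))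
    {x : R} (hx : x ≠ 0) (hxu : ¬IsUnit x) : ∃ g : R, Irreducible g ∧ IsCoprime g x := by
  obtain ⟨y, hy⟩ := hE x hx
  have hy₀ : y * x + 1 ≠ 0 := fun h => hxu <| .of_mul_eq_one (-y) (by linear_combination -h)
  obtain ⟨g, hg, c, hc⟩ := hF _ hy₀ hy
  exact ⟨g, hg, c, -y, by linear_combination -hc⟩

theorem exists_seq_irreducible_pairwise_isCoprime {R : Type*} [CommRing R] [NoZeroDivisors R]
    (h : ∀ x : R, x ≠ 0 → ¬IsUnit x → ∃ g : R, Irreducible g ∧ IsCoprime g x)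
    {p₀ : R} (hp₀ : p₀ ≠ 0) (hp₀u : ¬IsUnit p₀) :
    ∃ f : ℕ → R, (∀ n, Irreducible (f n)) ∧ Pairwise (IsCoprime on f) := by
  choose g hg hgp using fun x : {x : R // x ≠ 0 ∧ ¬IsUnit x} => h x.1 x.2.1 x.2.2
  let step (x : {x : R // x ≠ 0 ∧ ¬IsUnit x}) : {x : R // x ≠ 0 ∧ ¬IsUnit x} :=
    ⟨x * g x, mul_ne_zero x.2.1 (hg x).ne_zero, fun hu => x.2.2 (isUnit_of_mul_isUnit_left hu)⟩
  let p (n : ℕ) := step^[n] ⟨p₀, hp₀, hp₀u⟩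
  have hp_succ (n : ℕ) : (p (n + 1)).1 = (p n).1 * g (p n) := by
    simp only [p, iterate_succ_apply', step]
  have hg_dvd {m n : ℕ} (hmn : m < n) : g (p m) ∣ (p n).1 := by
    induction n, hmn using Nat.le_induction with
    | base => exact hp_succ m ▸ dvd_mul_left _ _
    | succ n _ ih => exact hp_succ n ▸ ih.mul_right _
  have : Std.Symm (IsCoprime on fun n => g (p n)) := ⟨fun _ _ h => h.symm⟩
  exact ⟨fun n => g (p n), fun n => hg _,
    pairwise_iff_gt.2 fun _ _ hmn => (hgp _).of_isCoprime_of_dvd_right (hg_dvd hmn)⟩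

theorem injective_span_singleton_of_pairwise_isCoprime {R ι : Type*} [CommSemiring R] {f : ι → R}
    (hf : ∀ i, ¬IsUnit (f i)) (h : Pairwise (IsCoprime on f)) :
    Injective fun i => Ideal.span {f i} := by
  intro m n hmn
  by_contra hne
  have hcop := (Ideal.isCoprime_span_singleton_iff _ _).2 (h hne)
  rw [show Ideal.span {f m} = Ideal.span {f n} from hmn, isCoprime_self, Ideal.isUnit_iff,
    Ideal.span_singleton_eq_top] at hcop
  exact hf n hcop

theorem stmt_2 (R : Type*) [CommRing R] [IsDomain R] (hnf : ¬ IsField R)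
    (hF : ∀ x : R, x ≠ 0 → ¬ IsUnit x → ∃ f : R, Irreducible f ∧ f ∣ x)
    (hE : ∀ x : R, x ≠ 0 → ∃ y : R, ¬ IsUnit (y * x + 1)) :
    ∃ f : ℕ → R, (∀ n, Irreducible (f n)) ∧
      (∀ m n, m ≠ n → Ideal.span {f m} ⊔ Ideal.span {f n} = ⊤) ∧
      Function.Injective (fun n => Ideal.span {f n}) := by
  obtain ⟨p₀, hp₀, hp₀u⟩ := Ring.exists_not_isUnit_of_not_isField hnf
  obtain ⟨f, hirr, hcop⟩ := exists_seq_irreducible_pairwise_isCoprime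
    (fun _ hx hxu => exists_irreducible_isCoprime_of_furstenberg hF hE hx hxu) hp₀ hp₀u
  refine ⟨f, hirr, fun m n hmn => ?_,
    injective_span_singleton_of_pairwise_isCoprime (fun n => (hirr n).not_isUnit) hcop⟩
  rw [← Ideal.isCoprime_iff_sup_eq, Ideal.isCoprime_span_singleton_iff]
  exact hcop hmn
end

section
/- Let R be a Furstenberg domain, not a field, with #R > #R^×. Then R has infinitely many atoms (pairwise nonassociate irreducibles). -/
/-!
If there were only finitely many irreducibles up to associates, let `P ≠ 0` be their product.
Every `1 + P * r` is then `0` or a unit: an irreducible divisor of it would divide `P`, hence `1`.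
Since `r ↦ 1 + P * r` is injective, `#R ≤ #Rˣ + 1`; but a domain that is not a field is infinite,
so `#Rˣ < #R` forces `#Rˣ + 1 < #R`.
-/

open Cardinal

theorem Cardinal.mk_le_mk_units_add_one {M : Type*} [MonoidWithZero M] {s : Set M}
    (hs : ∀ x ∈ s, x = 0 ∨ IsUnit x) : #s ≤ #Mˣ + 1 := by
  have hsub : s ⊆ insert 0 (Set.range ((↑) : Mˣ → M)) := fun x hx => hs x hx
  calc #s ≤ #(insert 0 (Set.range ((↑) : Mˣ → M)) : Set M) := mk_le_mk_of_subset hsub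
    _ ≤ #(Set.range ((↑) : Mˣ → M)) + 1 := mk_insert_le
    _ ≤ #Mˣ + 1 := add_le_add_left mk_range_le 1

theorem exists_ne_zero_forall_irreducible_dvd {M : Type*} [CommMonoidWithZero M]
    [NoZeroDivisors M] [Nontrivial M] (h : {a : Associates M | Irreducible a}.Finite) :
    ∃ P : M, P ≠ 0 ∧ ∀ q : M, Irreducible q → q ∣ P := by
  have irreducible_out {a : Associates M} (ha : a ∈ h.toFinset) : Irreducible (Quot.out a) := by
    rw [← Associates.irreducible_mk, Associates.quot_out]
    exact h.mem_toFinset.mp ha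
  refine ⟨∏ a ∈ h.toFinset, Quot.out a,
    Finset.prod_ne_zero_iff.mpr fun a ha => (irreducible_out ha).ne_zero, fun q hq => ?_⟩
  have hmem : Associates.mk q ∈ h.toFinset := h.mem_toFinset.mpr (Associates.irreducible_mk.mpr hq)
  exact (Associates.mk_quot_out q).symm.dvd.trans (Finset.dvd_prod_of_mem _ hmem)

theorem eq_zero_or_isUnit_one_add_mul {R : Type*} [CommRing R]
    (hF : ∀ x : R, x ≠ 0 → ¬ IsUnit x → ∃ f : R, Irreducible f ∧ f ∣ x)
    {P : R} (hP : ∀ q : R, Irreducible q → q ∣ P) (r : R) :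
    1 + P * r = 0 ∨ IsUnit (1 + P * r) := by
  by_contra! hc
  obtain ⟨q, hq, hqd⟩ := hF _ hc.1 hc.2
  have hq1 : q ∣ 1 := by simpa using hqd.sub ((hP q hq).mul_right r)
  exact hq.not_isUnit (isUnit_of_dvd_one hq1)

theorem infinite_setOf_irreducible_associates {R : Type*} [CommRing R] [IsDomain R]
    (hF : ∀ x : R, x ≠ 0 → ¬ IsUnit x → ∃ f : R, Irreducible f ∧ f ∣ x)
    (hcard : #Rˣ + 1 < #R) : {a : Associates R | Irreducible a}.Infinite := by
  intro hfin
  obtain ⟨P, hP0, hP⟩ := exists_ne_zero_forall_irreducible_dvd hfin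
  have hinj : Function.Injective fun r : R => 1 + P * r :=
    fun a b hab => mul_left_cancel₀ hP0 (add_left_cancel hab)
  have hle : #R ≤ #Rˣ + 1 := by
    rw [← mk_range_eq _ hinj]
    exact mk_le_mk_units_add_one <| by
      rintro _ ⟨r, rfl⟩
      exact eq_zero_or_isUnit_one_add_mul hF hP r
  exact hle.not_gt hcard

theorem mk_units_add_one_lt_mk {R : Type*} [CommRing R] [IsDomain R] (hnf : ¬ IsField R)
    (hcard : #Rˣ < #R) : #Rˣ + 1 < #R := by
  have : Infinite R := by
    by_contra! hfin
    exact hnf (Finite.isField_of_domain R)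
  exact add_lt_of_lt (aleph0_le_mk R) hcard (one_lt_aleph0.trans_le (aleph0_le_mk R))

theorem exists_seq_irreducible_not_associated {M : Type*} [CommMonoidWithZero M]
    (h : {a : Associates M | Irreducible a}.Infinite) :
    ∃ f : ℕ → M, (∀ n, Irreducible (f n)) ∧ ∀ m n, m ≠ n → ¬ Associated (f m) (f n) := by
  let e := h.natEmbedding
  refine ⟨fun n => Quot.out (e n : Associates M), fun n => ?_, fun m n hmn hassoc => ?_⟩
  · rw [← Associates.irreducible_mk, Associates.quot_out]
    exact (e n).2
  · refine hmn (e.injective (Subtype.ext ?_))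
    rw [← Associates.quot_out (e m : Associates M), ← Associates.quot_out (e n : Associates M)]
    exact Associates.mk_eq_mk_iff_associated.mpr hassoc

theorem stmt_6 (R : Type*) [CommRing R] [IsDomain R] (hnf : ¬ IsField R)
    (hF : ∀ x : R, x ≠ 0 → ¬ IsUnit x → ∃ f : R, Irreducible f ∧ f ∣ x)
    (hcard : Cardinal.mk Rˣ < Cardinal.mk R) :
    ∃ f : ℕ → R, (∀ n, Irreducible (f n)) ∧
      ∀ m n, m ≠ n → ¬ Associated (f m) (f n) :=
  exists_seq_irreducible_not_associated <|
    infinite_setOf_irreducible_associates hF (mk_units_add_one_lt_mk hnf hcard)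
end

section
/- Let R be a Furstenberg domain. Then the set of irreducible elements of R is either empty (exactly when R is a field) or infinite. -/
/-!
If a Furstenberg domain `R` that is not a field had only finitely many irreducibles, their
product `m` would be a nonzero nonunit, and every `1 + m ^ (k + 1)` would be a unit, since an
irreducible divisor of it would also divide `m ^ (k + 1)` and hence `1`. These units are pairwise
distinct, so `Rˣ` is infinite, and then so are the associates `u * p` of any irreducible `p`.
-/

def IsFurstenberg (R : Type*) [MonoidWithZero R] : Prop :=
  ∀ x : R, x ≠ 0 → ¬IsUnit x → ∃ f : R, Irreducible f ∧ f ∣ x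

theorem Set.infinite_setOf_irreducible_of_infinite_units {R : Type*} [MonoidWithZero R]
    [IsRightCancelMulZero R] [Infinite Rˣ] {p : R} (hp : Irreducible p) :
    {x : R | Irreducible x}.Infinite :=
  Set.infinite_of_injective_forall_mem (f := fun u : Rˣ => (u : R) * p)
    (fun _ _ h => Units.ext (mul_right_cancel₀ hp.ne_zero h))
    (fun u => (irreducible_units_mul u).2 hp)

namespace IsFurstenberg

variable {R : Type*}

theorem setOf_irreducible_eq_empty_iff [CommSemiring R] [Nontrivial R] (hR : IsFurstenberg R) :
    {x : R | Irreducible x} = ∅ ↔ IsField R := by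
  refine ⟨fun hempty => ?_, fun hfield => Set.eq_empty_of_forall_notMem fun x hx => ?_⟩
  · by_contra hnf
    obtain ⟨x, hx0, hxu⟩ := Ring.exists_not_isUnit_of_not_isField hnf
    obtain ⟨f, hf, -⟩ := hR x hx0 hxu
    exact hempty.subset hf
  · obtain ⟨y, hy⟩ := hfield.mul_inv_cancel hx.ne_zero
    exact hx.not_isUnit (.of_mul_eq_one y hy)

theorem isUnit_one_add_of_forall_irreducible_dvd [CommRing R] (hR : IsFurstenberg R) {m : R}
    (hm : ¬IsUnit m) (hdvd : ∀ q : R, Irreducible q → q ∣ m) : IsUnit (1 + m) := by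
  by_contra hu
  have hne : 1 + m ≠ 0 := fun h =>
    hm (by rw [eq_neg_of_add_eq_zero_right h]; exact isUnit_one.neg)
  obtain ⟨q, hq, hqd⟩ := hR _ hne hu
  exact hq.not_isUnit (isUnit_of_dvd_one (by simpa using dvd_sub hqd (hdvd q hq)))

theorem infinite_units_of_forall_irreducible_dvd [CommRing R] [IsDomain R] (hR : IsFurstenberg R)
    {m : R} (hm0 : m ≠ 0) (hm : ¬IsUnit m) (hdvd : ∀ q : R, Irreducible q → q ∣ m) :
    Infinite Rˣ := by
  have hunit (k : ℕ) : IsUnit (1 + m ^ (k + 1)) :=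
    hR.isUnit_one_add_of_forall_irreducible_dvd
      (fun h => hm (isUnit_of_dvd_unit (dvd_pow_self m k.succ_ne_zero) h))
      fun q hq => (hdvd q hq).trans (dvd_pow_self m k.succ_ne_zero)
  exact Infinite.of_injective (fun k => (hunit k).unit) fun j k hjk => Nat.succ_injective
    (pow_injective_of_not_isUnit hm hm0 (add_left_cancel (congrArg Units.val hjk)))

theorem infinite_setOf_irreducible [CommRing R] [IsDomain R] (hR : IsFurstenberg R)
    (hnf : ¬IsField R) : {x : R | Irreducible x}.Infinite := by
  intro hfin
  obtain ⟨x, hx0, hxu⟩ := Ring.exists_not_isUnit_of_not_isField hnf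
  obtain ⟨p, hp, -⟩ := hR x hx0 hxu
  set m := ∏ q ∈ hfin.toFinset, q
  have hdvd (q : R) (hq : Irreducible q) : q ∣ m :=
    Finset.dvd_prod_of_mem _ (hfin.mem_toFinset.2 hq)
  have hm0 : m ≠ 0 := Finset.prod_ne_zero_iff.2 fun q hq => (hfin.mem_toFinset.1 hq).ne_zero
  have hm : ¬IsUnit m := fun h => hp.not_isUnit (isUnit_of_dvd_unit (hdvd p hp) h)
  have : Infinite Rˣ := hR.infinite_units_of_forall_irreducible_dvd hm0 hm hdvd
  exact Set.infinite_setOf_irreducible_of_infinite_units hp hfin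

end IsFurstenberg

theorem stmt_7 (R : Type*) [CommRing R] [IsDomain R]
    (hF : ∀ x : R, x ≠ 0 → ¬ IsUnit x → ∃ f : R, Irreducible f ∧ f ∣ x) :
    ({x : R | Irreducible x} = ∅ ↔ IsField R) ∧
      (¬ IsField R → {x : R | Irreducible x}.Infinite) :=
  ⟨IsFurstenberg.setOf_irreducible_eq_empty_iff hF, IsFurstenberg.infinite_setOf_irreducible hF⟩
end

section
/- Let R be a domain, not a field, satisfying Condition (E). For every polynomial at + b ∈ R[t] with a ≠ 0, there exists x ∈ R such that ax + b is a nonzero nonunit. -/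
/-!
If `a` is a unit, `x ↦ a * x + b` is onto, so it hits a nonzero nonunit, which exists because `R`
is not a field. If `a` is not a unit and `b = 0`, take `x = 1`. Otherwise Condition (E) gives `y`
with `y * a + 1` a nonunit, necessarily nonzero, and `x = b * y` yields the nonzero nonunit
`a * x + b = b * (y * a + 1)`.
-/

theorem IsUnit.exists_mul_add_eq {R : Type*} [Ring R] {a : R} (ha : IsUnit a) (b c : R) :
    ∃ x, a * x + b = c :=
  ⟨ha.unit⁻¹ * (c - b), by simp [← mul_assoc]⟩

theorem mul_add_one_ne_zero_of_not_isUnit {R : Type*} [CommRing R] {a : R} (ha : ¬IsUnit a)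
    (y : R) : y * a + 1 ≠ 0 := fun h =>
  ha (.of_mul_eq_one (-y) (by linear_combination -h))

theorem stmt_9 (R : Type*) [CommRing R] [IsDomain R] (hnf : ¬ IsField R)
    (hE : ∀ x : R, x ≠ 0 → ∃ y : R, ¬ IsUnit (y * x + 1))
    (a b : R) (ha : a ≠ 0) :
    ∃ x : R, a * x + b ≠ 0 ∧ ¬ IsUnit (a * x + b) := by
  by_cases hau : IsUnit a
  · obtain ⟨n, hn0, hnu⟩ := Ring.exists_not_isUnit_of_not_isField hnf
    obtain ⟨x, hx⟩ := hau.exists_mul_add_eq b n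
    exact ⟨x, hx ▸ hn0, hx ▸ hnu⟩
  by_cases hb : b = 0
  · exact ⟨1, by simpa [hb] using ha, by simpa [hb] using hau⟩
  obtain ⟨y, hy⟩ := hE a ha
  have hfactor : a * (b * y) + b = b * (y * a + 1) := by ring
  refine ⟨b * y, ?_, ?_⟩
  · rw [hfactor]
    exact mul_ne_zero hb (mul_add_one_ne_zero_of_not_isUnit hau y)
  · rw [hfactor]
    exact fun h => hy (isUnit_of_mul_isUnit_right h)
end

section
/- Let R be an atomic domain satisfying Condition (E), let I be a nonzero ideal of R, and let H be a proper subgroup of the unit group (R/I)^×. Then there are infinitely many pairwise comaximal irreducibles f of R such that the class of f modulo I lies in (R/I)^× \ H. -/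
/-!
Fix a unit `u₀ ∉ H` and a nonzero `a ∈ I`. If `c` is a unit modulo `I`, pick `x` with
`x ≡ 1 (mod c)` and `x ≡ u₀ (mod I)`; Condition (E) moves `x` by a multiple of `a * c` to a
nonunit `z`, which has the same two residues. Some irreducible factor `g` of `z` then has unit
class outside `H`, and `g` is coprime to `c` because `z ≡ 1 (mod c)`. Taking for `c` the product
of the irreducibles found so far yields the sequence.
-/

theorem exists_not_isUnit_dvd_sub {R : Type*} [CommRing R]
    (hE : ∀ x : R, x ≠ 0 → ∃ y : R, ¬ IsUnit (y * x + 1)) (x : R) {d : R} (hd : d ≠ 0) :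
    ∃ z : R, ¬ IsUnit z ∧ d ∣ z - x := by
  by_cases hx : IsUnit x
  · obtain ⟨v, rfl⟩ := hx
    obtain ⟨y, hy⟩ := hE (↑v⁻¹ * d) ((Units.mul_right_eq_zero v⁻¹).not.mpr hd)
    refine ⟨v * (y * (↑v⁻¹ * d) + 1), (Units.isUnit_units_mul v _).not.mpr hy, y, ?_⟩
    linear_combination (y * d) * v.mul_inv
  · exact ⟨x, hx, by simp⟩

theorem Units.exists_mem_notMem_of_multiset_prod {N : Type*} [CommMonoid N]
    (H : Subgroup Nˣ) {s : Multiset N} {u : Nˣ} (hu : u ∉ H) (hs : s.prod = u) :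
    ∃ v : Nˣ, (v : N) ∈ s ∧ v ∉ H := by
  by_contra! hall
  have hsH : s.prod ∈ H.toSubmonoid.map (Units.coeHom N) := by
    refine Submonoid.multiset_prod_mem _ _ fun g hg => ?_
    obtain ⟨v, rfl⟩ := isUnit_of_dvd_unit (Multiset.dvd_prod hg) (hs ▸ u.isUnit)
    exact ⟨v, hall v hg, rfl⟩
  obtain ⟨v, hvH, hv⟩ := hsH
  exact hu (Units.ext (hv.trans hs) ▸ hvH)

theorem exists_seq_pairwise_isCoprime {R : Type*} [CommSemiring R] (P : R → Prop)
    (S : Submonoid R) (hPS : ∀ g, P g → g ∈ S) (hnext : ∀ c ∈ S, ∃ g, P g ∧ IsCoprime g c) :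
    ∃ f : ℕ → R, (∀ n, P (f n)) ∧ ∀ m n, m ≠ n → IsCoprime (f m) (f n) := by
  choose next hPnext hcop using fun c : S => hnext c c.2
  let partialProd : ℕ → S := fun n =>
    Nat.rec 1 (fun _ c => c * ⟨next c, hPS _ (hPnext c)⟩) n
  refine ⟨fun n => next (partialProd n), fun n => hPnext _, ?_⟩
  have hdvd : ∀ m n, m < n → next (partialProd m) ∣ (partialProd n).1 := by
    intro m n hmn
    induction n, hmn using Nat.le_induction with
    | base => exact dvd_mul_left _ _
    | succ n _ ih => exact ih.mul_right _
  have hlt : ∀ m n, m < n → IsCoprime (next (partialProd n)) (next (partialProd m)) :=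
    fun m n hmn => (hcop _).of_isCoprime_of_dvd_right (hdvd m n hmn)
  intro m n hmn
  rcases hmn.lt_or_gt with h | h
  · exact (hlt m n h).symm
  · exact hlt n m h

theorem exists_irreducible_isCoprime_unit_notMem {R : Type*} [CommRing R] [NoZeroDivisors R]
    (hatomic : ∀ x : R, x ≠ 0 → ¬ IsUnit x →
      ∃ s : Multiset R, (∀ f ∈ s, Irreducible f) ∧ s.prod = x)
    (hE : ∀ x : R, x ≠ 0 → ∃ y : R, ¬ IsUnit (y * x + 1))
    {I : Ideal R} (hI : I ≠ ⊥) {H : Subgroup (R ⧸ I)ˣ} {u₀ : (R ⧸ I)ˣ} (hu₀ : u₀ ∉ H)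
    {c : R} (hc : IsUnit (Ideal.Quotient.mk I c)) :
    ∃ g : R, (Irreducible g ∧ ∃ u : (R ⧸ I)ˣ, (u : R ⧸ I) = Ideal.Quotient.mk I g ∧ u ∉ H) ∧
      IsCoprime g c := by
  set π := Ideal.Quotient.mk I
  have : Nontrivial (R ⧸ I) := by
    by_contra! htriv
    exact hu₀ (Subsingleton.elim u₀ 1 ▸ H.one_mem)
  obtain ⟨a, haI, ha0⟩ := (Submodule.ne_bot_iff I).mp hI
  have hc0 : c ≠ 0 := by
    rintro rfl
    exact not_isUnit_zero (map_zero π ▸ hc)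
  obtain ⟨w, hw⟩ := Ideal.Quotient.mk_surjective (↑hc.unit⁻¹ : R ⧸ I)
  obtain ⟨r, hr⟩ := Ideal.Quotient.mk_surjective (u₀ : R ⧸ I)
  -- `1 + c * w * (r - 1)` is `1` mod `c` and `r` mod `I`, since `w` inverts `c` mod `I`.
  obtain ⟨z, hzu, k, hk⟩ :=
    exists_not_isUnit_dvd_sub hE (1 + c * w * (r - 1)) (mul_ne_zero ha0 hc0)
  have hπz : π z = u₀ := by
    have hπa : π a = 0 := Ideal.Quotient.eq_zero_iff_mem.mpr haI
    have hcw : π c * π w = 1 := by rw [hw]; exact hc.mul_val_inv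
    rw [eq_add_of_sub_eq hk]
    simp only [map_add, map_mul, map_sub, map_one, hπa, ← hr]
    linear_combination (π r - 1) * hcw
  have hzc : IsCoprime z c := ⟨1, -(w * (r - 1) + a * k), by linear_combination hk⟩
  have hz0 : z ≠ 0 := by
    rintro rfl
    exact u₀.ne_zero (hπz ▸ map_zero π)
  obtain ⟨s, hs, rfl⟩ := hatomic z hz0 hzu
  obtain ⟨v, hv, hvH⟩ := Units.exists_mem_notMem_of_multiset_prod H hu₀
    (s := s.map π) (by rw [← map_multiset_prod, hπz])
  obtain ⟨g, hg, hgv⟩ := Multiset.mem_map.mp hv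
  exact ⟨g, ⟨hs g hg, v, hgv.symm, hvH⟩, hzc.of_isCoprime_of_dvd_left (Multiset.dvd_prod hg)⟩

theorem stmt_10 (R : Type*) [CommRing R] [IsDomain R]
    (hatomic : ∀ x : R, x ≠ 0 → ¬ IsUnit x →
      ∃ s : Multiset R, (∀ f ∈ s, Irreducible f) ∧ s.prod = x)
    (hE : ∀ x : R, x ≠ 0 → ∃ y : R, ¬ IsUnit (y * x + 1))
    (I : Ideal R) (hI : I ≠ ⊥) (H : Subgroup (R ⧸ I)ˣ) (hH : H ≠ ⊤) :
    ∃ f : ℕ → R, (∀ n, Irreducible (f n)) ∧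
      (∀ m n, m ≠ n → Ideal.span {f m} ⊔ Ideal.span {f n} = ⊤) ∧
      (∀ n, ∃ u : (R ⧸ I)ˣ, (u : R ⧸ I) = Ideal.Quotient.mk I (f n) ∧ u ∉ H) := by
  obtain ⟨u₀, hu₀⟩ := SetLike.exists_not_mem_of_ne_top H hH
  obtain ⟨f, hf, hcop⟩ := exists_seq_pairwise_isCoprime
    (fun g => Irreducible g ∧ ∃ u : (R ⧸ I)ˣ, (u : R ⧸ I) = Ideal.Quotient.mk I g ∧ u ∉ H)
    ((IsUnit.submonoid (R ⧸ I)).comap (Ideal.Quotient.mk I))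
    (fun _ ⟨_, u, hu, _⟩ => (IsUnit.mem_submonoid_iff _).mpr (hu ▸ u.isUnit))
    (fun _ hc => exists_irreducible_isCoprime_unit_notMem hatomic hE hI hu₀ hc)
  exact ⟨f, fun n => (hf n).1,
    fun m n hmn => ((Ideal.isCoprime_span_singleton_iff _ _).mpr (hcop m n hmn)).sup_eq,
    fun n => (hf n).2⟩
end

section
/- Let R be a Furstenberg domain having at least one and only finitely many irreducibles up to associates, say f_1, ..., f_n. Then there is a nonzero ideal I of R with 1 + I ⊆ R^×; in particular #R^× = #R. -/
/-! Multiply together one representative of each of the finitely many classes of irreducibles to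
get `P ≠ 0`. Every irreducible divides every element `x` of `(P)`, hence none divides `1 + x`; in a
Furstenberg domain this forces `1 + x` to be a unit. Then `x ↦ 1 + x P` embeds `R` into `Rˣ`. -/

section

variable {R : Type*} [CommRing R]

theorem exists_ne_zero_forall_irreducible_dvd_s11 [IsDomain R]
    (hfin : {J : Ideal R | ∃ f : R, Irreducible f ∧ J = Ideal.span {f}}.Finite) :
    ∃ P : R, P ≠ 0 ∧ ∀ f : R, Irreducible f → f ∣ P := by
  classical
  have hrep : ∀ J ∈ hfin.toFinset, ∃ f : R, Irreducible f ∧ J = Ideal.span {f} := fun J hJ =>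
    hfin.mem_toFinset.mp hJ
  choose g hg_irr hg_span using hrep
  refine ⟨∏ J ∈ hfin.toFinset.attach, g J J.2,
    Finset.prod_ne_zero_iff.mpr fun J _ => (hg_irr J J.2).ne_zero, fun f hf => ?_⟩
  have hJ : Ideal.span {f} ∈ hfin.toFinset := hfin.mem_toFinset.mpr ⟨f, hf, rfl⟩
  have hassoc : Associated f (g _ hJ) := Ideal.span_singleton_eq_span_singleton.mp (hg_span _ hJ)
  exact hassoc.dvd.trans (Finset.dvd_prod_of_mem _ (Finset.mem_attach _ ⟨_, hJ⟩))

theorem isUnit_one_add_of_forall_irreducible_dvd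
    (hF : ∀ x : R, x ≠ 0 → ¬ IsUnit x → ∃ f : R, Irreducible f ∧ f ∣ x)
    (hne : ∃ f : R, Irreducible f) {a : R} (ha : ∀ f : R, Irreducible f → f ∣ a) :
    IsUnit (1 + a) := by
  have no_irreducible_dvd : ∀ f : R, Irreducible f → ¬ f ∣ 1 + a := fun f hf hfd =>
    hf.not_isUnit (isUnit_of_dvd_one (by simpa using hfd.sub (ha f hf)))
  by_contra hnu
  rcases eq_or_ne (1 + a) 0 with h0 | h0
  · obtain ⟨f, hf⟩ := hne
    exact no_irreducible_dvd f hf (h0 ▸ dvd_zero f)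
  · obtain ⟨f, hf, hfd⟩ := hF _ h0 hnu
    exact no_irreducible_dvd f hf hfd

theorem Cardinal.mk_units_eq_of_isUnit_one_add [IsDomain R] {I : Ideal R} (hI : I ≠ ⊥)
    (hunit : ∀ x ∈ I, IsUnit (1 + x)) : Cardinal.mk Rˣ = Cardinal.mk R := by
  obtain ⟨P, hPI, hP0⟩ := Submodule.exists_mem_ne_zero_of_ne_bot hI
  have hunit' : ∀ x : R, IsUnit (1 + x * P) := fun x => hunit _ (I.mul_mem_left x hPI)
  refine le_antisymm (Cardinal.mk_le_of_injective fun _ _ => Units.ext)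
    (Cardinal.mk_le_of_injective (f := fun x => (hunit' x).unit) fun x y hxy => ?_)
  have hxy' : 1 + x * P = 1 + y * P := congrArg Units.val hxy
  exact mul_right_cancel₀ hP0 (add_left_cancel hxy')

end

theorem stmt_11 (R : Type*) [CommRing R] [IsDomain R]
    (hF : ∀ x : R, x ≠ 0 → ¬ IsUnit x → ∃ f : R, Irreducible f ∧ f ∣ x)
    (hne : ∃ x : R, Irreducible x)
    (hfin : {J : Ideal R | ∃ f : R, Irreducible f ∧ J = Ideal.span {f}}.Finite) :
    (∃ I : Ideal R, I ≠ ⊥ ∧ ∀ x ∈ I, IsUnit (1 + x)) ∧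
      Cardinal.mk Rˣ = Cardinal.mk R := by
  obtain ⟨P, hP0, hdvd⟩ := exists_ne_zero_forall_irreducible_dvd_s11 hfin
  have hunit : ∀ x ∈ Ideal.span {P}, IsUnit (1 + x) := fun x hx =>
    isUnit_one_add_of_forall_irreducible_dvd hF hne fun f hf =>
      (hdvd f hf).trans (Ideal.mem_span_singleton.mp hx)
  have hI : Ideal.span {P} ≠ ⊥ := by rwa [Ne, Ideal.span_singleton_eq_bot]
  exact ⟨⟨_, hI, hunit⟩, Cardinal.mk_units_eq_of_isUnit_one_add hI hunit⟩
end

section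
/- For a Dedekind domain R that is not a field, the following are equivalent: (i) R has zero Jacobson radical; (ii) R has infinitely many maximal ideals; (iii) R has infinitely many atoms (pairwise nonassociate irreducibles). -/
/-!
A nonzero element of a Dedekind domain lies in only finitely many maximal ideals. Hence if there
are infinitely many maximal ideals, no nonzero element lies in all of them; conversely, if there
are finitely many, their product is a nonzero ideal inside the Jacobson radical. Every nonzero
maximal ideal contains an irreducible element, and an irreducible lies in only finitely many
maximal ideals, so infinitely many maximal ideals force infinitely many atoms. Finally, a Dedekind
domain with finitely many maximal ideals is a PID, where every atom is a maximal ideal.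
-/

namespace Ideal

variable {R : Type*} [CommRing R]

lemma infinite_setOf_isMaximal_of_jacobson_bot_eq_bot [IsDomain R] (hnf : ¬ IsField R)
    (hjac : jacobson (⊥ : Ideal R) = ⊥) : {M : Ideal R | M.IsMaximal}.Infinite := by
  intro hfin
  have hprod_le : ∏ M ∈ hfin.toFinset, M ≤ jacobson ⊥ :=
    le_sInf fun M ⟨_, hM⟩ ↦ prod_le_inf.trans (Finset.inf_le (hfin.mem_toFinset.mpr hM))
  have hprod_ne : ∏ M ∈ hfin.toFinset, M ≠ ⊥ := Finset.prod_ne_zero_iff.mpr fun M hM ↦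
    Ring.ne_bot_of_isMaximal_of_not_isField (hfin.mem_toFinset.mp hM) hnf
  exact hprod_ne (le_bot_iff.mp (hjac ▸ hprod_le))

lemma finite_setOf_isMaximal_and_mem [IsDedekindDomain R] {x : R} (hx : x ≠ 0) :
    {M : Ideal R | M.IsMaximal ∧ x ∈ M}.Finite := by
  have hspan : span {x} ≠ (0 : Ideal R) := by simpa [span_singleton_eq_bot] using hx
  refine ((finite_factors hspan).image (·.asIdeal)).subset ?_
  rintro M ⟨hM, hxM⟩
  have hM0 : M ≠ ⊥ := fun h ↦ hx (by simpa [h] using hxM)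
  exact ⟨⟨M, hM.isPrime, hM0⟩, dvd_iff_le.mpr ((span_singleton_le_iff_mem M).mpr hxM), rfl⟩

lemma jacobson_bot_eq_bot_of_infinite_setOf_isMaximal [IsDedekindDomain R]
    (hinf : {M : Ideal R | M.IsMaximal}.Infinite) : jacobson (⊥ : Ideal R) = ⊥ := by
  refine eq_bot_iff.mpr fun x hx ↦ mem_bot.mpr (by_contra fun hx0 ↦ hinf ?_)
  refine (finite_setOf_isMaximal_and_mem hx0).subset fun M hM ↦ ⟨hM, ?_⟩
  exact (mem_sInf.mp hx) ⟨bot_le, hM⟩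

lemma IsPrime.exists_irreducible_mem [IsDomain R] [WfDvdMonoid R] {P : Ideal R} (hP : P.IsPrime)
    (hP0 : P ≠ ⊥) : ∃ f, Irreducible f ∧ f ∈ P := by
  obtain ⟨a, haP, ha0⟩ := Submodule.exists_mem_ne_zero_of_ne_bot hP0
  induction a using WfDvdMonoid.induction_on_irreducible with
  | zero => exact absurd rfl ha0
  | unit u hu => exact absurd (eq_top_of_isUnit_mem P haP hu) hP.ne_top
  | mul a i ha hi ih =>
    rcases hP.mem_or_mem haP with hiP | haP
    · exact ⟨i, hi, hiP⟩
    · exact ih haP ha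

lemma infinite_atoms_of_infinite_setOf_isMaximal [IsDedekindDomain R] (hnf : ¬ IsField R)
    (hinf : {M : Ideal R | M.IsMaximal}.Infinite) :
    {J : Ideal R | ∃ f : R, Irreducible f ∧ J = span {f}}.Infinite := by
  intro hfin
  have hfiber : ∀ J ∈ {J : Ideal R | ∃ f : R, Irreducible f ∧ J = span {f}},
      {M : Ideal R | M.IsMaximal ∧ J ≤ M}.Finite := by
    rintro J ⟨f, hf, rfl⟩
    refine (finite_setOf_isMaximal_and_mem hf.ne_zero).subset ?_
    exact fun M ⟨hM, hfM⟩ ↦ ⟨hM, (span_singleton_le_iff_mem M).mp hfM⟩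
  refine hinf ((hfin.biUnion hfiber).subset fun M hM ↦ ?_)
  obtain ⟨f, hf, hfM⟩ :=
    hM.isPrime.exists_irreducible_mem (Ring.ne_bot_of_isMaximal_of_not_isField hM hnf)
  exact Set.mem_biUnion ⟨f, hf, rfl⟩ ⟨hM, (span_singleton_le_iff_mem M).mpr hfM⟩

lemma infinite_setOf_isMaximal_of_infinite_atoms [IsDedekindDomain R]
    (hinf : {J : Ideal R | ∃ f : R, Irreducible f ∧ J = span {f}}.Infinite) :
    {M : Ideal R | M.IsMaximal}.Infinite := by
  intro hfin
  have := IsPrincipalIdealRing.of_finite_maximals hfin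
  refine hinf (hfin.subset ?_)
  rintro J ⟨f, hf, rfl⟩
  exact PrincipalIdealRing.isMaximal_of_irreducible hf

end Ideal

theorem stmt_16_general (R : Type*) [CommRing R] [IsDedekindDomain R]
    (hnf : ¬ IsField R) :
    (Ideal.jacobson (⊥ : Ideal R) = ⊥ ↔ {M : Ideal R | M.IsMaximal}.Infinite) ∧
      ({M : Ideal R | M.IsMaximal}.Infinite ↔
        {J : Ideal R | ∃ f : R, Irreducible f ∧ J = Ideal.span {f}}.Infinite) :=
  ⟨⟨Ideal.infinite_setOf_isMaximal_of_jacobson_bot_eq_bot hnf,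
      Ideal.jacobson_bot_eq_bot_of_infinite_setOf_isMaximal⟩,
    ⟨Ideal.infinite_atoms_of_infinite_setOf_isMaximal hnf,
      Ideal.infinite_setOf_isMaximal_of_infinite_atoms⟩⟩

theorem stmt_16 (R : Type*) [CommRing R] [IsDomain R] [IsDedekindDomain R]
    (hnf : ¬ IsField R) :
    (Ideal.jacobson (⊥ : Ideal R) = ⊥ ↔ {M : Ideal R | M.IsMaximal}.Infinite) ∧
      ({M : Ideal R | M.IsMaximal}.Infinite ↔
        {J : Ideal R | ∃ f : R, Irreducible f ∧ J = Ideal.span {f}}.Infinite) :=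
  stmt_16_general R hnf
end

section
/- Let R be an infinite commutative ring with #R > #R^×. Then R has infinitely many maximal ideals. -/
/-!
Suppose `R` had only finitely many maximal ideals and let `J` be their intersection, so that
`J ⊆ Jac(R)`. Then `j ↦ 1 + j` embeds `J` into `Rˣ`, so `#J < #R`. Since `R → R ⧸ J` is a
surjective local homomorphism, units of `R ⧸ J ≃ ∏ R ⧸ M` (Chinese remainder theorem) lift to
`Rˣ`; hence every residue field has at most `#Rˣ + 1 < #R` elements, and so does the finite
product `R ⧸ J`. But `#R = #(R ⧸ J) · #J`, which is then `< #R` as `R` is infinite.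
-/

open Cardinal Function Ideal

universe u

namespace Cardinal

theorem mk_eq_mk_units_add_one (G₀ : Type u) [GroupWithZero G₀] : #G₀ = #G₀ˣ + 1 := by
  classical
  rw [← mk_congr (Equiv.optionSubtypeNe (0 : G₀)), mk_option, mk_congr unitsEquivNeZero]

theorem mk_pi_lt_of_lt {ι : Type u} [Finite ι] {α : ι → Type u} {c : Cardinal.{u}}
    (hc : ℵ₀ ≤ c) (h : ∀ i, #(α i) < c) : #(Π i, α i) < c := by
  have := Fintype.ofFinite ι
  set κ := Finset.univ.sup fun i ↦ #(α i)
  have hκ : κ < c := (Finset.sup_lt_iff (aleph0_pos.trans_le hc)).2 fun i _ ↦ h i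
  calc #(Π i, α i) ≤ κ ^ #ι := by
        rw [mk_pi, ← prod_const']
        exact prod_le_prod _ _ fun i ↦ Finset.le_sup (f := fun i ↦ #(α i)) (Finset.mem_univ i)
    _ < c := by
        rw [mk_fintype]
        rcases hc.eq_or_lt with rfl | hc
        · exact power_lt_aleph0 hκ natCast_lt_aleph0
        · exact power_nat_le_max.trans_lt (max_lt hκ hc)

end Cardinal

namespace Ideal

theorem mk_eq_mk_quotient_mul_mk {R : Type u} [Ring R] (I : Ideal R) [I.IsTwoSided] :
    #R = #(R ⧸ I) * #I := by
  have := mk_congr (AddSubgroup.addGroupEquivQuotientProdAddSubgroup (s := I.toAddSubgroup))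
  rwa [mk_prod, lift_id, lift_id] at this

variable {R : Type u} [CommRing R]

theorem mk_le_mk_units_of_le_jacobson_bot {I : Ideal R} (hI : I ≤ jacobson ⊥) : #I ≤ #Rˣ := by
  have hunit (x : I) : IsUnit (1 + (x : R)) :=
    isUnit_of_sub_one_mem_jacobson_bot _ (by simpa using hI x.2)
  refine mk_le_of_injective (f := fun x ↦ (hunit x).unit) fun x y hxy ↦ ?_
  exact Subtype.ext (add_left_cancel (congrArg Units.val hxy))

theorem iInf_isMaximal_le_jacobson_bot :
    ⨅ M : {M : Ideal R // M.IsMaximal}, (M : Ideal R) ≤ jacobson ⊥ :=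
  le_sInf fun M ⟨_, hM⟩ ↦ iInf_le_of_le ⟨M, hM⟩ le_rfl

theorem pairwise_isCoprime_isMaximal :
    Pairwise (IsCoprime on ((↑) : {M : Ideal R // M.IsMaximal} → Ideal R)) :=
  fun M N hMN ↦ isCoprime_iff_sup_eq.2 <| M.2.coprime_of_ne N.2 (Subtype.coe_injective.ne hMN)

theorem units_map_quotient_surjective_of_finite_isMaximal
    [Finite {M : Ideal R // M.IsMaximal}] (M : Ideal R) [hM : M.IsMaximal] :
    Surjective (Units.map (Quotient.mk M : R →* R ⧸ M)) := by
  set J := ⨅ N : {N : Ideal R // N.IsMaximal}, (N : Ideal R)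
  let e := quotientInfRingEquivPiQuotient _ (pairwise_isCoprime_isMaximal (R := R))
  have hJ := IsLocalRing.surjective_units_map_of_local_ringHom (Quotient.mk J)
    Quotient.mk_surjective (isLocalHom_of_le_jacobson_bot J iInf_isMaximal_le_jacobson_bot)
  have h := (surjective_eval (⟨M, hM⟩ : {N : Ideal R // N.IsMaximal})).comp
    (MulEquiv.piUnits.surjective.comp ((Units.mapEquiv e.toMulEquiv).surjective.comp hJ))
  convert h using 1
  ext
  rfl

theorem mk_quotient_le_mk_units_add_one [Finite {M : Ideal R // M.IsMaximal}]
    (M : Ideal R) [M.IsMaximal] : #(R ⧸ M) ≤ #Rˣ + 1 := by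
  let := Quotient.field M
  rw [mk_eq_mk_units_add_one (R ⧸ M)]
  gcongr
  exact mk_le_of_surjective (units_map_quotient_surjective_of_finite_isMaximal M)

end Ideal

theorem stmt_19 (R : Type*) [CommRing R] [Infinite R]
    (hcard : Cardinal.mk Rˣ < Cardinal.mk R) :
    {M : Ideal R | M.IsMaximal}.Infinite := by
  by_contra hfin
  have : Finite {M : Ideal R // M.IsMaximal} := (Set.not_infinite.mp hfin).to_subtype
  have hR : ℵ₀ ≤ #R := aleph0_le_mk R
  set J := ⨅ M : {M : Ideal R // M.IsMaximal}, (M : Ideal R)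
  have hfield (M : {M : Ideal R // M.IsMaximal}) : #(R ⧸ (M : Ideal R)) < #R :=
    have := M.2
    (mk_quotient_le_mk_units_add_one _).trans_lt
      (add_lt_of_lt hR hcard (one_lt_aleph0.trans_le hR))
  have hquot : #(R ⧸ J) < #R :=
    (mk_congr (quotientInfRingEquivPiQuotient _ pairwise_isCoprime_isMaximal).toEquiv).trans_lt
      (mk_pi_lt_of_lt hR hfield)
  have hJ : #J < #R :=
    (mk_le_mk_units_of_le_jacobson_bot iInf_isMaximal_le_jacobson_bot).trans_lt hcard
  exact (mk_eq_mk_quotient_mul_mk J ▸ mul_lt_of_lt hR hquot hJ).false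
end
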